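/- arXiv:0911.0152 — 3 statements merged into one kernel-verified Lean document; each statement's English description precedes it below -/
import Mathlib

section
/- Let F₁,…,F_p : ℝ → ℝ be smooth nowhere-zero functions, H₁,…,H_p : ℝ → ℝ smooth, and suppose X₁,…,X_p are smooth functions satisfying X_ℓ'·F_ℓ - X_ℓ·F_ℓ' = H_ℓ for each ℓ and Σ_{ℓ=1}^p X_ℓ = 0 identically. Define G_{ℓ,0} := 0, G_{ℓ,i+1} := G_{ℓ,i}' + H_ℓ·F_ℓ^{(i)}/F_ℓ², and G_i := Σ_{ℓ=1}^p G_{ℓ,i}. Then the (p+1)×(p+1) determinant whose (i+1)-st row is (F₁^{(i)}, F₂^{(i)}, …, F_p^{(i)}, G_i) for i = 0,1,…,p vanishes identically. (Here G₀ = 0 and F^{(0)} = F.) -/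
/-- The sequence `G_{ℓ,i}` defined recursively by `G_{ℓ,0} = 0`,
    `G_{ℓ,i+1} = G_{ℓ,i}' + H_ℓ · F_ℓ^{(i)} / F_ℓ²`. -/
noncomputable def Gseq (F H : ℝ → ℝ) : ℕ → ℝ → ℝ
  | 0 => fun _ => 0
  | (i + 1) => fun x => deriv (Gseq F H i) x + H x * iteratedDeriv i F x / (F x) ^ 2

lemma Gseq_key (F H X : ℝ → ℝ) (hF : ContDiff ℝ (⊤ : ℕ∞) F) (hX : ContDiff ℝ (⊤ : ℕ∞) X)
    (hFne : ∀ x, F x ≠ 0)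
    (hode : ∀ x, deriv X x * F x - X x * deriv F x = H x) (i : ℕ) :
    ∀ x, Gseq F H i x = iteratedDeriv i X x - X x * iteratedDeriv i F x / F x := by
  induction i with
  | zero =>
    intro x
    show (0:ℝ) = iteratedDeriv 0 X x - X x * iteratedDeriv 0 F x / F x
    rw [iteratedDeriv_zero, iteratedDeriv_zero]
    field_simp [hFne x]
    ring
  | succ i ih =>
    intro x
    have hFd : Differentiable ℝ (iteratedDeriv i F) :=
      hF.differentiable_iteratedDeriv i (by exact_mod_cast lt_top_iff_ne_top.2 (by simp))
    have hXd : Differentiable ℝ (iteratedDeriv i X) :=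
      hX.differentiable_iteratedDeriv i (by exact_mod_cast lt_top_iff_ne_top.2 (by simp))
    have hXd1 : DifferentiableAt ℝ X x := (hX.differentiable (by simp)).differentiableAt
    have hFd1 : DifferentiableAt ℝ F x := (hF.differentiable (by simp)).differentiableAt
    have hG : Gseq F H i = fun y => iteratedDeriv i X y - X y * iteratedDeriv i F y / F y :=
      funext ih
    have hd : deriv (Gseq F H i) x =
        deriv (iteratedDeriv i X) x -
          ((deriv X x * iteratedDeriv i F x + X x * deriv (iteratedDeriv i F) x) * F x
            - X x * iteratedDeriv i F x * deriv F x) / (F x) ^ 2 := by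
      rw [hG]
      rw [deriv_fun_sub (hXd x) (((hXd1.fun_mul (hFd x)).fun_div hFd1 (hFne x)))]
      rw [deriv_fun_div (hXd1.fun_mul (hFd x)) hFd1 (hFne x)]
      rw [deriv_fun_mul hXd1 (hFd x)]
    show deriv (Gseq F H i) x + H x * iteratedDeriv i F x / (F x) ^ 2 = _
    rw [hd, iteratedDeriv_succ, iteratedDeriv_succ, ← hode x]
    field_simp [hFne x]
    ring

/-- If `X_ℓ' F_ℓ - X_ℓ F_ℓ' = H_ℓ` for each `ℓ` with `Σ X_ℓ = 0`, then the
    `(p+1)×(p+1)` determinant with rows `(F₁^{(i)},…,F_p^{(i)}, G_i)` vanishes. -/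
theorem near_wronskian_det_vanishes (p : ℕ) (F H X : Fin p → ℝ → ℝ)
    (hF : ∀ ℓ, ContDiff ℝ (⊤ : ℕ∞) (F ℓ)) (hH : ∀ ℓ, ContDiff ℝ (⊤ : ℕ∞) (H ℓ))
    (hX : ∀ ℓ, ContDiff ℝ (⊤ : ℕ∞) (X ℓ)) (hFne : ∀ ℓ x, F ℓ x ≠ 0)
    (hode : ∀ ℓ x, deriv (X ℓ) x * F ℓ x - X ℓ x * deriv (F ℓ) x = H ℓ x)
    (hsum : ∀ x, ∑ ℓ, X ℓ x = 0) (x : ℝ) :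
    Matrix.det (Matrix.of fun i j : Fin (p + 1) =>
      if h : (j : ℕ) < p then iteratedDeriv i (F ⟨j, h⟩) x
      else ∑ ℓ, Gseq (F ℓ) (H ℓ) i x) = 0 := by
  -- sum of iterated derivatives of X vanishes
  have hsumit : ∀ (i : ℕ) (y : ℝ), ∑ ℓ, iteratedDeriv i (X ℓ) y = 0 := by
    intro i
    induction i with
    | zero => intro y; simpa using hsum y
    | succ i ih =>
      intro y
      have hd : ∀ ℓ : Fin p, DifferentiableAt ℝ (iteratedDeriv i (X ℓ)) y := fun ℓ =>
        ((hX ℓ).differentiable_iteratedDeriv i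
          (by exact_mod_cast lt_top_iff_ne_top.2 (by simp))).differentiableAt
      have : ∑ ℓ, iteratedDeriv (i+1) (X ℓ) y
          = deriv (fun z => ∑ ℓ, iteratedDeriv i (X ℓ) z) y := by
        rw [deriv_fun_sum (fun ℓ _ => hd ℓ)]
        simp [iteratedDeriv_succ]
      rw [this]
      have : (fun z => ∑ ℓ, iteratedDeriv i (X ℓ) z) = fun _ => (0:ℝ) := funext ih
      rw [this, deriv_const]
  rw [← Matrix.exists_mulVec_eq_zero_iff]
  refine ⟨fun j => if h : (j : ℕ) < p then X ⟨j, h⟩ x / F ⟨j, h⟩ x else 1, ?_, ?_⟩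
  · intro h0
    have := congrFun h0 (Fin.last p)
    simp at this
  · funext i
    simp only [Matrix.mulVec, dotProduct, Pi.zero_apply]
    rw [Fin.sum_univ_castSucc]
    have hlast : ¬ ((Fin.last p : Fin (p+1)) : ℕ) < p := by simp
    simp only [Matrix.of_apply, Fin.coe_castSucc, Fin.is_lt, dif_pos, dif_neg hlast, mul_one]
    have : ∀ j : Fin p,
        iteratedDeriv i (F ⟨(j : ℕ), j.is_lt⟩) x * (X ⟨(j : ℕ), j.is_lt⟩ x / F ⟨(j : ℕ), j.is_lt⟩ x)
        = iteratedDeriv i (X j) x - Gseq (F j) (H j) i x := by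
      intro j
      rw [Gseq_key (F j) (H j) (X j) (hF j) (hX j) (hFne j) (hode j) i x]
      have : (⟨(j:ℕ), j.is_lt⟩ : Fin p) = j := by simp
      rw [this]
      ring
    rw [Finset.sum_congr rfl (fun j _ => this j), Finset.sum_sub_distrib, hsumit i x]
    ring
end

section
/- Let f : ℝ → ℝ^N be N-1 times continuously differentiable at β ∈ ℝ. Then det(f(β), f'(β), …, f^{(N-1)}(β)) = lim_{β₁,…,β_N → β} [∏_{k=1}^{N-1} k! / ∏_{1≤i<j≤N} (β_j - β_i)] · det(f(β₁), f(β₂), …, f(β_N)), where the limit is taken over N-tuples of pairwise distinct points converging to β. -/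
/-!
Subtracting from row `k` of `(f (b i) j)` suitable multiples of the rows above it turns it into
the `k`-th divided difference of `f` at `b 0, …, b k`; the row operations form a lower triangular
matrix of determinant `1 / ∏_{i<j} (b j - b i)`. Applying Rolle's theorem `k` times to `f` minus
its interpolating polynomial at those nodes shows that the `k`-th divided difference is
`f⁽ᵏ⁾ ξ / k!` for some `ξ` between the nodes, so it tends to `f⁽ᵏ⁾ β / k!` as the nodes collapse
to `β`.
-/

open Filter Finset Polynomial Topology
open scoped Nat

namespace Polynomial

variable {𝕜 : Type*} [NontriviallyNormedField 𝕜]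

protected theorem iteratedDeriv (p : 𝕜[X]) (n : ℕ) :
    iteratedDeriv n (fun x => p.eval x) = fun x => (derivative^[n] p).eval x := by
  induction n generalizing p with
  | zero => rfl
  | succ n ih =>
    have hderiv : deriv (fun x => p.eval x) = fun x => p.derivative.eval x := by
      ext; simp
    rw [iteratedDeriv_succ', hderiv, ih, Function.iterate_succ_apply]

theorem iteratedDeriv_eval_of_natDegree_le {p : 𝕜[X]} {k : ℕ} (hp : p.natDegree ≤ k) (x : 𝕜) :
    iteratedDeriv k (fun x => p.eval x) x = k ! * p.coeff k := by
  rw [p.iteratedDeriv, eq_C_of_natDegree_le_zero ((natDegree_iterate_derivative p k).trans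
    (by omega))]
  simp [coeff_iterate_derivative, Nat.descFactorial_self]

protected theorem contDiff (p : 𝕜[X]) (n : WithTop ℕ∞) : ContDiff 𝕜 n (fun x => p.eval x) := by
  simpa [aeval_def] using p.contDiff_aeval (𝕜 := 𝕜) n

end Polynomial

theorem ContDiffAt.continuousAt_iteratedDeriv {𝕜 F : Type*} [NontriviallyNormedField 𝕜]
    [NormedAddCommGroup F] [NormedSpace 𝕜 F] {g : 𝕜 → F} {x : 𝕜} {k : ℕ}
    (hg : ContDiffAt 𝕜 k g x) : ContinuousAt (iteratedDeriv k g) x := by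
  obtain ⟨u, hu, hgu⟩ := hg.contDiffOn le_rfl (by simp)
  obtain ⟨v, hvu, hv, hxv⟩ := mem_nhds_iff.1 hu
  exact (((hgu.mono hvu).continuousOn_iteratedDerivWithin le_rfl hv.uniqueDiffOn).congr
    (iteratedDerivWithin_of_isOpen hv).symm).continuousAt (hv.mem_nhds hxv)

theorem tendsto_nhds_of_eventually_mem_image {X Y Z : Type*} [TopologicalSpace Y]
    [TopologicalSpace Z] {F : X → Z} {l : Filter X} {c : Y → Z} {y : Y} (hc : ContinuousAt c y)
    (h : ∀ V ∈ 𝓝 y, ∀ᶠ x in l, F x ∈ c '' V) : Tendsto F l (𝓝 (c y)) := fun W hW => by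
  filter_upwards [h _ (hc hW)] with x ⟨ξ, hξ, hx⟩
  exact hx ▸ hξ

theorem exists_iteratedDeriv_eq_zero_of_strictMono {k : ℕ} {h : ℝ → ℝ} {U : Set ℝ}
    (hU : IsOpen U) (hUc : U.OrdConnected) (hh : ContDiffOn ℝ k h U) {x : Fin (k + 1) → ℝ}
    (hx : StrictMono x) (hxU : ∀ i, x i ∈ U) (hzero : ∀ i, h (x i) = 0) :
    ∃ ξ ∈ Set.Icc (x 0) (x (Fin.last k)), iteratedDeriv k h ξ = 0 := by
  induction k generalizing h with
  | zero => exact ⟨x 0, ⟨le_rfl, le_rfl⟩, by simpa using hzero 0⟩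
  | succ k ih =>
    have hrolle (i : Fin (k + 1)) : ∃ c ∈ Set.Ioo (x i.castSucc) (x i.succ), deriv h c = 0 :=
      exists_deriv_eq_zero (hx Fin.castSucc_lt_succ)
        (hh.continuousOn.mono (hUc.out (hxU _) (hxU _))) (by rw [hzero, hzero])
    choose y hy hy0 using hrolle
    have hymono : StrictMono y := Fin.strictMono_iff_lt_succ.2 fun i =>
      ((hy i.castSucc).2.trans_eq (by rw [Fin.succ_castSucc])).trans (hy i.succ).1
    have hyU (i : Fin (k + 1)) : y i ∈ U :=
      hUc.out (hxU i.castSucc) (hxU i.succ) (Set.Ioo_subset_Icc_self (hy i))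
    obtain ⟨ξ, hξ, hξ0⟩ := ih (hh.deriv_of_isOpen hU (by norm_cast)) hymono hyU hy0
    refine ⟨ξ, ⟨?_, ?_⟩, by rwa [iteratedDeriv_succ']⟩
    · exact (hy 0).1.le.trans hξ.1
    · exact hξ.2.trans (hy (Fin.last k)).2.le

section DividedDifference

variable {F : Type*} [Field F] [DecidableEq F]

def dividedDiff (g : F → F) (t : Finset F) : F :=
  ∑ x ∈ t, g x / ∏ y ∈ t.erase x, (x - y)

theorem dividedDiff_image {ι : Type*} [DecidableEq ι] (g : F → F) (s : Finset ι) {b : ι → F}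
    (hb : Function.Injective b) :
    dividedDiff g (s.image b) = ∑ i ∈ s, g (b i) / ∏ l ∈ s.erase i, (b i - b l) := by
  rw [dividedDiff, sum_image hb.injOn]
  refine sum_congr rfl fun i _ => ?_
  rw [← image_erase hb, prod_image hb.injOn]

theorem coeff_interpolate_eq_dividedDiff {t : Finset F} {k : ℕ} (ht : t.card = k + 1)
    (g : F → F) : (Lagrange.interpolate t id g).coeff k = dividedDiff g t := by
  rw [Lagrange.interpolate_apply, finsetSum_coeff, dividedDiff]
  refine sum_congr rfl fun x hx => ?_
  have hcard : (t.erase x).card = k := by rw [card_erase_of_mem hx, ht]; rfl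
  have hmonic : (∏ y ∈ t.erase x, (X - C y)).Monic :=
    monic_prod_of_monic _ _ fun y _ => monic_X_sub_C y
  have hdeg : (∏ y ∈ t.erase x, (X - C y)).natDegree = k := by
    rw [natDegree_prod_of_monic _ _ fun y _ => monic_X_sub_C y]
    simp [hcard]
  have hbasis : Lagrange.basis t id x =
      C (∏ y ∈ t.erase x, (x - y))⁻¹ * ∏ y ∈ t.erase x, (X - C y) := by
    rw [Lagrange.basis, ← prod_inv_distrib, map_prod, ← prod_mul_distrib]
    rfl
  rw [coeff_C_mul, hbasis, coeff_C_mul, ← hdeg, hmonic.coeff_natDegree, div_eq_mul_inv]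
  ring

end DividedDifference

theorem exists_iteratedDeriv_eq_factorial_mul_dividedDiff {k : ℕ} {t : Finset ℝ}
    (ht : t.card = k + 1) {U : Set ℝ} (hU : IsOpen U) (hUc : U.OrdConnected) (htU : ↑t ⊆ U)
    {g : ℝ → ℝ} (hg : ContDiffOn ℝ k g U) :
    ∃ ξ ∈ U, iteratedDeriv k g ξ = k ! * dividedDiff g t := by
  set p := Lagrange.interpolate t id g
  have hdeg : p.natDegree ≤ k :=
    natDegree_le_of_degree_le <|
      (Lagrange.degree_interpolate_le g (Set.injOn_id _)).trans_eq (by simp [ht])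
  have hxU (i : Fin (k + 1)) : t.orderEmbOfFin ht i ∈ U := htU (t.orderEmbOfFin_mem ht i)
  have hzero (i : Fin (k + 1)) : (g - fun x => p.eval x) (t.orderEmbOfFin ht i) = 0 := by
    rw [Pi.sub_apply, sub_eq_zero]
    exact (Lagrange.eval_interpolate_at_node g (Set.injOn_id _) (t.orderEmbOfFin_mem ht i)).symm
  obtain ⟨ξ, hξ, hξ0⟩ := exists_iteratedDeriv_eq_zero_of_strictMono hU hUc
    (hg.sub (p.contDiff k).contDiffOn) (t.orderEmbOfFin ht).strictMono hxU hzero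
  have hξU : ξ ∈ U := hUc.out (hxU 0) (hxU _) hξ
  refine ⟨ξ, hξU, ?_⟩
  rwa [iteratedDeriv_fun_sub (hg.contDiffAt (hU.mem_nhds hξU)) (p.contDiff k).contDiffAt,
    iteratedDeriv_eval_of_natDegree_le hdeg, coeff_interpolate_eq_dividedDiff ht, sub_eq_zero]
    at hξ0

theorem tendsto_dividedDiff_image {ι : Type*} [DecidableEq ι] {s : Finset ι} {k : ℕ}
    (hs : s.card = k + 1) {g : ℝ → ℝ} {β : ℝ} (hg : ContDiffAt ℝ k g β) :
    Tendsto (fun b : ι → ℝ => dividedDiff g (s.image b))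
      (𝓝[{b | Function.Injective b}] fun _ => β) (𝓝 (iteratedDeriv k g β / k !)) := by
  obtain ⟨u, hu, hgu⟩ := hg.contDiffOn le_rfl (by simp)
  refine tendsto_nhds_of_eventually_mem_image (c := fun ξ => iteratedDeriv k g ξ / k !)
    (hg.continuousAt_iteratedDeriv.div_const _) fun V hV => ?_
  obtain ⟨δ, hδ, hball⟩ := Metric.mem_nhds_iff.1 (inter_mem hV hu)
  have hnear : ∀ᶠ b : ι → ℝ in 𝓝 fun _ => β, ∀ i ∈ s, b i ∈ Metric.ball β δ :=
    (eventually_all_finset s).2 fun i _ =>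
      ((continuous_apply i).tendsto _).eventually_mem (Metric.ball_mem_nhds β hδ)
  filter_upwards [nhdsWithin_le_nhds hnear, self_mem_nhdsWithin] with b hb hinj
  obtain ⟨ξ, hξ, hξeq⟩ := exists_iteratedDeriv_eq_factorial_mul_dividedDiff
    (by rw [card_image_of_injective s hinj, hs]) Metric.isOpen_ball (convex_ball β δ).ordConnected
    (by simpa [Set.subset_def] using hb) (hgu.mono (hball.trans Set.inter_subset_right))
  exact ⟨ξ, (hball hξ).1, by dsimp only; rw [hξeq, mul_div_cancel_left₀ _ (by positivity)]⟩

section DividedDifferenceMatrix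

variable {K : Type*} [Field K] {N : ℕ}

def dividedDiffWeights (b : Fin N → K) : Matrix (Fin N) (Fin N) K :=
  Matrix.of fun k i => if i ≤ k then (∏ l ∈ (Iic k).erase i, (b i - b l))⁻¹ else 0

theorem dividedDiffWeights_mul [DecidableEq K] (f : K → Fin N → K) {b : Fin N → K}
    (hb : Function.Injective b) :
    dividedDiffWeights b * Matrix.of (fun i j => f (b i) j) =
      Matrix.of fun k j => dividedDiff (fun x => f x j) ((Iic k).image b) := by
  ext k j
  simp only [Matrix.mul_apply, dividedDiffWeights, Matrix.of_apply, ite_mul, zero_mul,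
    sum_ite, sum_const_zero, add_zero, filter_ge_eq_Iic, dividedDiff_image _ _ hb, div_eq_inv_mul]

theorem det_dividedDiffWeights (b : Fin N → K) :
    (dividedDiffWeights b).det = (∏ i, ∏ j ∈ Ioi i, (b j - b i))⁻¹ := by
  have htri : (dividedDiffWeights b).IsLowerTriangular := fun i j hij => by
    simp [dividedDiffWeights, not_le.2 (show i < j from hij)]
  rw [Matrix.det_of_isLowerTriangular _ htri, ← prod_inv_distrib]
  simp only [dividedDiffWeights, Matrix.of_apply, le_refl, if_true, Iic_erase, ← prod_inv_distrib]
  exact prod_comm' fun i j => by simp [and_comm]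

theorem det_dividedDiff_image [DecidableEq K] (f : K → Fin N → K) {b : Fin N → K}
    (hb : Function.Injective b) :
    (Matrix.of fun k j => dividedDiff (fun x => f x j) ((Iic k).image b)).det =
      (Matrix.of fun i j => f (b i) j).det / ∏ i, ∏ j ∈ Ioi i, (b j - b i) := by
  rw [← dividedDiffWeights_mul f hb, Matrix.det_mul, det_dividedDiffWeights, inv_mul_eq_div]

end DividedDifferenceMatrix

theorem Matrix.det_eq_prod_factorial_mul_det_div_factorial {K : Type*} [Field K] [CharZero K]
    {N : ℕ} (A : Matrix (Fin N) (Fin N) K) :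
    A.det = (∏ k ∈ range N, (k ! : K)) * (Matrix.of fun i j => A i j / (i : ℕ)!).det := by
  rw [← Fin.prod_univ_eq_prod_range, ← Matrix.det_mul_column]
  congr
  ext i j
  exact (mul_div_cancel₀ (A i j) (Nat.cast_ne_zero.2 (Nat.factorial_ne_zero _))).symm

/-- Confluent limit of the Vandermonde/divided-difference formula: the determinant of
    derivatives is the limit of the scaled determinants at distinct collapsing points. -/
theorem confluent_vandermonde_limit (N : ℕ) (f : ℝ → Fin N → ℝ) (β : ℝ)
    (hf : ContDiffAt ℝ (N - 1) f β) :
    Tendsto (fun b : Fin N → ℝ =>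
        ((∏ k ∈ Finset.range N, (Nat.factorial k : ℝ)) /
            ∏ i : Fin N, ∏ j ∈ Finset.Ioi i, (b j - b i)) *
          Matrix.det (Matrix.of fun i j : Fin N => f (b i) j))
      (nhdsWithin (fun _ => β) {b : Fin N → ℝ | Function.Injective b})
      (nhds (Matrix.det (Matrix.of fun i j : Fin N =>
          iteratedDeriv (i : ℕ) (fun x => f x j) β))) := by
  have hN : ((N : WithTop ℕ∞) - 1) = ((N - 1 : ℕ) : WithTop ℕ∞) := by norm_cast
  have hcoord (k j : Fin N) : ContDiffAt ℝ (k : ℕ) (fun x => f x j) β :=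
    (contDiffAt_pi.1 hf j).of_le (hN ▸ by exact_mod_cast Nat.le_sub_one_of_lt k.2)
  have hlim : Tendsto (fun b : Fin N → ℝ =>
      Matrix.of fun k j => dividedDiff (fun x => f x j) ((Iic k).image b))
      (𝓝[{b | Function.Injective b}] fun _ => β)
      (𝓝 (Matrix.of fun k j : Fin N => iteratedDeriv k (fun x => f x j) β / (k : ℕ)!)) :=
    tendsto_pi_nhds.2 fun k => tendsto_pi_nhds.2 fun j =>
      tendsto_dividedDiff_image (by simp) (hcoord k j)
  rw [Matrix.det_eq_prod_factorial_mul_det_div_factorial]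
  refine (((continuous_id.matrix_det.tendsto _).comp hlim).const_mul _).congr' ?_
  filter_upwards [self_mem_nhdsWithin] with b hb
  rw [Function.comp_apply, id_eq, det_dividedDiff_image f hb]
  ring
end

section
/- Let F₊, F₋, H₊, H₋ : ℝ → ℝ be smooth with F₊, F₋ nowhere zero, and suppose X₊ + X₋ = 0 where X±'F± - X±F±' = H±. Then (H₊F₋ + H₋F₊)·{F₊, F₋}' - (H₊'F₋ + H₋'F₊)·{F₊, F₋} = 0, where {f,g} := f'g - fg' and {F₊,F₋}' is its derivative. -/
/-- The `p = 2` (no inliers) Wronskian identity: if `X₊ + X₋ = 0` with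
    `X±' F± - X± F±' = H±`, then
    `(H₊F₋ + H₋F₊){F₊,F₋}' - (H₊'F₋ + H₋'F₊){F₊,F₋} = 0`. -/
theorem wronskian_identity_p2 (Fp Fm Hp Hm Xp Xm : ℝ → ℝ)
    (hFp : ContDiff ℝ (⊤ : ℕ∞) Fp) (hFm : ContDiff ℝ (⊤ : ℕ∞) Fm)
    (hHp : ContDiff ℝ (⊤ : ℕ∞) Hp) (hHm : ContDiff ℝ (⊤ : ℕ∞) Hm)
    (hXp : ContDiff ℝ (⊤ : ℕ∞) Xp) (hXm : ContDiff ℝ (⊤ : ℕ∞) Xm)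
    (hFpne : ∀ x, Fp x ≠ 0) (hFmne : ∀ x, Fm x ≠ 0)
    (hodeP : ∀ x, deriv Xp x * Fp x - Xp x * deriv Fp x = Hp x)
    (hodeM : ∀ x, deriv Xm x * Fm x - Xm x * deriv Fm x = Hm x)
    (hsum : ∀ x, Xp x + Xm x = 0) (x : ℝ) :
    (Hp x * Fm x + Hm x * Fp x) *
        deriv (fun y => deriv Fp y * Fm y - Fp y * deriv Fm y) x
      - (deriv Hp x * Fm x + deriv Hm x * Fp x) *
        (deriv Fp x * Fm x - Fp x * deriv Fm x) = 0 := by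
  obtain ⟨dFp, cFp'⟩ := contDiff_infty_iff_deriv.mp (hFp.of_le (by simp))
  obtain ⟨dFm, cFm'⟩ := contDiff_infty_iff_deriv.mp (hFm.of_le (by simp))
  obtain ⟨dXp, cXp'⟩ := contDiff_infty_iff_deriv.mp (hXp.of_le (by simp))
  obtain ⟨dXm, cXm'⟩ := contDiff_infty_iff_deriv.mp (hXm.of_le (by simp))
  have hFp1 : HasDerivAt Fp (deriv Fp x) x := (dFp x).hasDerivAt
  have hFm1 : HasDerivAt Fm (deriv Fm x) x := (dFm x).hasDerivAt
  have hXp1 : HasDerivAt Xp (deriv Xp x) x := (dXp x).hasDerivAt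
  have hXm1 : HasDerivAt Xm (deriv Xm x) x := (dXm x).hasDerivAt
  have hFp2 : HasDerivAt (deriv Fp) (deriv (deriv Fp) x) x :=
    ((cFp'.differentiable (by simp)) x).hasDerivAt
  have hFm2 : HasDerivAt (deriv Fm) (deriv (deriv Fm) x) x :=
    ((cFm'.differentiable (by simp)) x).hasDerivAt
  have hXp2 : HasDerivAt (deriv Xp) (deriv (deriv Xp) x) x :=
    ((cXp'.differentiable (by simp)) x).hasDerivAt
  have hXm2 : HasDerivAt (deriv Xm) (deriv (deriv Xm) x) x :=
    ((cXm'.differentiable (by simp)) x).hasDerivAt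
  -- derivative of the Wronskian
  have hW : deriv (fun y => deriv Fp y * Fm y - Fp y * deriv Fm y) x
      = deriv (deriv Fp) x * Fm x - Fp x * deriv (deriv Fm) x := by
    have := ((hFp2.mul hFm1).sub (hFp1.mul hFm2)).deriv
    exact this.trans (by ring)
  -- Hp equals the ODE expression as a function
  have hHpfun : Hp = fun y => deriv Xp y * Fp y - Xp y * deriv Fp y := by
    funext y; exact (hodeP y).symm
  have hHmfun : Hm = fun y => deriv Xm y * Fm y - Xm y * deriv Fm y := by
    funext y; exact (hodeM y).symm
  have hHp' : deriv Hp x = deriv (deriv Xp) x * Fp x - Xp x * deriv (deriv Fp) x := by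
    rw [hHpfun]
    have := ((hXp2.mul hFp1).sub (hXp1.mul hFp2)).deriv
    exact this.trans (by ring)
  have hHm' : deriv Hm x = deriv (deriv Xm) x * Fm x - Xm x * deriv (deriv Fm) x := by
    rw [hHmfun]
    have := ((hXm2.mul hFm1).sub (hXm1.mul hFm2)).deriv
    exact this.trans (by ring)
  -- Xm = -Xp
  have hXmfun : Xm = fun y => -Xp y := by
    funext y; linarith [hsum y]
  have hXm' : deriv Xm x = -deriv Xp x := by
    rw [hXmfun, deriv.fun_neg]
  have hXm'' : deriv (deriv Xm) x = -deriv (deriv Xp) x := by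
    have : deriv Xm = fun y => -deriv Xp y := by
      funext y; rw [hXmfun, deriv.fun_neg]
    rw [this, deriv.fun_neg]
  have hXmx : Xm x = -Xp x := by rw [hXmfun]
  rw [hW, ← hodeP x, ← hodeM x, hHp', hHm', hXm', hXm'', hXmx]
  ring
end
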